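/- Let ℓ be a prime, m ≥ 1, and let M be a 2×2 matrix over ZMod ℓ^m that is conjugate by an invertible matrix over ZMod ℓ^m to the diagonal matrix diag(λ, μ), where λ, μ ∈ ZMod ℓ^m and λ − μ is a unit of ZMod ℓ^m. Then there are exactly two cyclic subgroups H of (ZMod ℓ^m)² of order exactly ℓ^m that are M-invariant (i.e., M·h ∈ H for all h ∈ H). -/

import Mathlib

/-!
Conjugating by `P` is an additive automorphism of `(ZMod ℓ^m)²` carrying `diag(λ, μ)`-invariant
cyclic subgroups to `M`-invariant ones, so we may take `M = diag(λ, μ)`. A vector of additive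
order `ℓ^m` has a unit coordinate, since otherwise `ℓ^(m-1)` kills it. If it spans an invariant
subgroup it is an eigenvector, and since `λ - μ` is a unit, an eigenvector with a unit
coordinate is a unit multiple of a standard basis vector; so the invariant subgroups are exactly
the two coordinate axes.
-/

open Matrix

section Semiconj

variable {G G' : Type*} [AddGroup G] [AddGroup G']

def invariantCyclicSubgroups (f : G → G) (n : ℕ) : Set (AddSubgroup G) :=
  {H | (∃ x, addOrderOf x = n ∧ H = AddSubgroup.zmultiples x) ∧ ∀ h ∈ H, f h ∈ H}

theorem map_mem_invariantCyclicSubgroups {e : G ≃+ G'} {f : G → G} {f' : G' → G'}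
    (he : Function.Semiconj e f f') {n : ℕ} {H : AddSubgroup G}
    (hH : H ∈ invariantCyclicSubgroups f n) :
    H.map e.toAddMonoidHom ∈ invariantCyclicSubgroups f' n := by
  obtain ⟨⟨x, hx, rfl⟩, hinv⟩ := hH
  refine ⟨⟨e x, by rw [e.addOrderOf_eq, hx], AddMonoidHom.map_zmultiples _ _⟩, ?_⟩
  rintro _ ⟨h, hh, rfl⟩
  exact ⟨f h, hinv h hh, he h⟩

theorem card_invariantCyclicSubgroups_of_semiconj {e : G ≃+ G'} {f : G → G} {f' : G' → G'}
    (he : Function.Semiconj e f f') (n : ℕ) :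
    Nat.card (invariantCyclicSubgroups f' n) = Nat.card (invariantCyclicSubgroups f n) := by
  have he' : Function.Semiconj e.symm f' f :=
    he.inverse_left e.left_inv e.right_inv
  refine (Nat.card_congr (e.mapAddSubgroup.toEquiv.subtypeEquiv fun H =>
    ⟨map_mem_invariantCyclicSubgroups he, fun hH => ?_⟩)).symm
  convert map_mem_invariantCyclicSubgroups he' hH
  exact (e.mapAddSubgroup.symm_apply_apply H).symm

end Semiconj

theorem card_invariantCyclicSubgroups_conj {ι R : Type*} [Fintype ι] [DecidableEq ι] [CommRing R]
    (P : (Matrix ι ι R)ˣ) (D : Matrix ι ι R) (n : ℕ) :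
    Nat.card (invariantCyclicSubgroups (P * D * P⁻¹ : Matrix ι ι R).mulVec n) =
      Nat.card (invariantCyclicSubgroups D.mulVec n) := by
  let e : (ι → R) ≃+ (ι → R) :=
    { toFun := (P : Matrix ι ι R).mulVec
      invFun := (↑P⁻¹ : Matrix ι ι R).mulVec
      left_inv v := by simp [mulVec_mulVec]
      right_inv v := by simp [mulVec_mulVec]
      map_add' := mulVec_add _ }
  refine card_invariantCyclicSubgroups_of_semiconj (e := e) (fun v => ?_) n
  simp [e, mulVec_mulVec, Matrix.mul_assoc]

namespace ZMod

theorem pow_nsmul_eq_zero_of_not_isUnit {ℓ k : ℕ} (hℓ : ℓ.Prime) {a : ZMod (ℓ ^ (k + 1))}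
    (ha : ¬IsUnit a) : ℓ ^ k • a = 0 := by
  have : NeZero (ℓ ^ (k + 1)) := NeZero.of_pos (pow_pos hℓ.pos _)
  obtain ⟨t, ht⟩ : ℓ ∣ a.val := by
    by_contra h
    refine ha ?_
    rw [← ZMod.natCast_zmod_val a, ZMod.isUnit_iff_coprime]
    exact (hℓ.coprime_iff_not_dvd.mpr h).symm.pow_right _
  rw [← ZMod.natCast_zmod_val a, ht, nsmul_eq_mul, ← Nat.cast_mul, ← mul_assoc, ← pow_succ,
    Nat.cast_mul, ZMod.natCast_self, zero_mul]

variable {n : ℕ} {M : Type*} [AddCommGroup M] [Module (ZMod n) M]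

variable (n) in
theorem zmultiples_eq_span (x : M) :
    AddSubgroup.zmultiples x = (Submodule.span (ZMod n) {x}).toAddSubgroup := by
  ext y
  simp only [AddSubgroup.mem_zmultiples_iff, Submodule.mem_toAddSubgroup,
    Submodule.mem_span_singleton]
  constructor
  · rintro ⟨k, rfl⟩
    exact ⟨k, Int.cast_smul_eq_zsmul _ _ _⟩
  · rintro ⟨c, rfl⟩
    exact ⟨(c.cast : ℤ), by rw [← Int.cast_smul_eq_zsmul (ZMod n), ZMod.intCast_zmod_cast]⟩

variable (n) in
theorem mem_zmultiples_iff_exists_smul {x y : M} :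
    y ∈ AddSubgroup.zmultiples x ↔ ∃ c : ZMod n, c • x = y := by
  rw [zmultiples_eq_span n, Submodule.mem_toAddSubgroup, Submodule.mem_span_singleton]

theorem zmultiples_smul_of_isUnit {c : ZMod n} (hc : IsUnit c) (x : M) :
    AddSubgroup.zmultiples (c • x) = AddSubgroup.zmultiples x := by
  rw [zmultiples_eq_span n, zmultiples_eq_span n, Submodule.span_singleton_smul_eq hc]

end ZMod

theorem exists_isUnit_apply_of_addOrderOf_eq {ι : Type*} {ℓ k : ℕ} (hℓ : ℓ.Prime)
    {x : ι → ZMod (ℓ ^ (k + 1))} (hx : addOrderOf x = ℓ ^ (k + 1)) : ∃ i, IsUnit (x i) := by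
  by_contra! h
  have hdvd := addOrderOf_dvd_of_nsmul_eq_zero
    (funext fun i => ZMod.pow_nsmul_eq_zero_of_not_isUnit hℓ (h i) : ℓ ^ k • x = 0)
  rw [hx, Nat.pow_dvd_pow_iff_le_right hℓ.one_lt] at hdvd
  omega

theorem addOrderOf_piSingle {ι : Type*} [DecidableEq ι] {M : ι → Type*}
    [∀ i, AddMonoid (M i)] (i : ι) (g : M i) : addOrderOf (Pi.single i g) = addOrderOf g :=
  addOrderOf_injective (AddMonoidHom.single M i) (Pi.single_injective i) g

theorem AddSubgroup.forall_mem_zmultiples_map_mem {G F : Type*} [AddGroup G] [FunLike F G G]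
    [AddMonoidHomClass F G G] (f : F) {x : G} (hx : f x ∈ zmultiples x) :
    ∀ h ∈ zmultiples x, f h ∈ zmultiples x := by
  rintro _ ⟨k, rfl⟩
  simpa [map_zsmul] using zsmul_mem hx k

theorem Matrix.eq_smul_single_of_diagonal_mulVec_eq_smul {ι R : Type*} [Fintype ι]
    [DecidableEq ι] [CommRing R] {d : ι → R} (hd : Pairwise fun i j => IsUnit (d i - d j))
    {x : ι → R} {c : R} (hx : diagonal d *ᵥ x = c • x) {i : ι} (hi : IsUnit (x i)) :
    x = x i • Pi.single i 1 := by
  have hcoord : ∀ j, (d j - c) * x j = 0 := fun j => by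
    rw [sub_mul, sub_eq_zero]
    simpa [mulVec_diagonal] using congrFun hx j
  have hc : d i = c := sub_eq_zero.mp ((hi.mul_left_eq_zero).mp (hcoord i))
  ext j
  rcases eq_or_ne j i with rfl | hji
  · simp
  · have hj := hcoord j
    rw [← hc, (hd hji).mul_right_eq_zero] at hj
    simp [hji, hj]

section Diagonal

variable {ι : Type*} [Fintype ι] [DecidableEq ι] {ℓ k : ℕ}

theorem invariantCyclicSubgroups_diagonal (hℓ : ℓ.Prime) {d : ι → ZMod (ℓ ^ (k + 1))}
    (hd : Pairwise fun i j => IsUnit (d i - d j)) :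
    invariantCyclicSubgroups (diagonal d).mulVec (ℓ ^ (k + 1)) =
      Set.range fun i => AddSubgroup.zmultiples (Pi.single i 1) := by
  ext H
  constructor
  · rintro ⟨⟨x, hx, rfl⟩, hinv⟩
    obtain ⟨i, hi⟩ := exists_isUnit_apply_of_addOrderOf_eq hℓ hx
    obtain ⟨c, hc⟩ := (ZMod.mem_zmultiples_iff_exists_smul (ℓ ^ (k + 1))).mp
      (hinv x (AddSubgroup.mem_zmultiples x))
    refine ⟨i, ?_⟩
    rw [eq_smul_single_of_diagonal_mulVec_eq_smul hd hc.symm hi, ZMod.zmultiples_smul_of_isUnit hi]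
  · rintro ⟨i, rfl⟩
    refine ⟨⟨_, ?_, rfl⟩, AddSubgroup.forall_mem_zmultiples_map_mem (diagonal d).mulVecLin ?_⟩
    · rw [addOrderOf_piSingle, ZMod.addOrderOf_one]
    · exact (ZMod.mem_zmultiples_iff_exists_smul _).mpr ⟨d i, by ext j; simp [Pi.single_apply]⟩

theorem card_invariantCyclicSubgroups_diagonal (hℓ : ℓ.Prime) {d : ι → ZMod (ℓ ^ (k + 1))}
    (hd : Pairwise fun i j => IsUnit (d i - d j)) :
    Nat.card (invariantCyclicSubgroups (diagonal d).mulVec (ℓ ^ (k + 1))) = Fintype.card ι := by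
  have : Fact (1 < ℓ ^ (k + 1)) := ⟨Nat.one_lt_pow k.succ_ne_zero hℓ.one_lt⟩
  rw [invariantCyclicSubgroups_diagonal hℓ hd, Nat.card_range_of_injective,
    Nat.card_eq_fintype_card]
  intro i j hij
  by_contra hne
  replace hij : AddSubgroup.zmultiples (Pi.single i 1 : ι → ZMod (ℓ ^ (k + 1))) =
      AddSubgroup.zmultiples (Pi.single j 1) := hij
  have hmem : Pi.single i 1 ∈ AddSubgroup.zmultiples (Pi.single j 1) :=
    hij ▸ AddSubgroup.mem_zmultiples _
  obtain ⟨c, hc⟩ := (ZMod.mem_zmultiples_iff_exists_smul (ℓ ^ (k + 1))).mp hmem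
  simpa [Pi.single_apply, hne] using congrFun hc i

end Diagonal

/-- Let `ℓ` be a prime, `m ≥ 1`, and `M` a `2×2` matrix over `ZMod ℓ^m` that is conjugate by
an invertible matrix over `ZMod ℓ^m` to `diag(λ, μ)` where `λ − μ` is a unit of `ZMod ℓ^m`.
Then there are exactly two cyclic subgroups `H` of `(ZMod ℓ^m)²` of order exactly `ℓ^m` that
are `M`-invariant. -/
theorem stmt_11 (ℓ m : ℕ) (hℓ : ℓ.Prime) (hm : 1 ≤ m)
    (M : Matrix (Fin 2) (Fin 2) (ZMod (ℓ ^ m))) (lam mu : ZMod (ℓ ^ m))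
    (hunit : IsUnit (lam - mu))
    (hconj : ∃ P : (Matrix (Fin 2) (Fin 2) (ZMod (ℓ ^ m)))ˣ,
      M = (P : Matrix (Fin 2) (Fin 2) (ZMod (ℓ ^ m))) * Matrix.diagonal ![lam, mu] *
        ((P⁻¹ : _ˣ) : Matrix (Fin 2) (Fin 2) (ZMod (ℓ ^ m)))) :
    Nat.card {H : AddSubgroup (Fin 2 → ZMod (ℓ ^ m)) //
        (∃ x : Fin 2 → ZMod (ℓ ^ m), addOrderOf x = ℓ ^ m ∧ H = AddSubgroup.zmultiples x) ∧
        ∀ h ∈ H, M.mulVec h ∈ H} = 2 := by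
  obtain ⟨P, rfl⟩ := hconj
  obtain ⟨k, rfl⟩ : ∃ k, m = k + 1 := ⟨m - 1, by omega⟩
  have hd : Pairwise fun i j => IsUnit (![lam, mu] i - ![lam, mu] j) := by
    intro i j hij
    fin_cases i <;> fin_cases j
    · exact absurd rfl hij
    · simpa using hunit
    · simpa using hunit.neg
    · exact absurd rfl hij
  change Nat.card (invariantCyclicSubgroups _ _) = 2
  rw [card_invariantCyclicSubgroups_conj, card_invariantCyclicSubgroups_diagonal hℓ hd,
    Fintype.card_fin]
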